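/- If (T, λ) is an edge-labeled tree with at least two leaves such that for every pair of distinct leaves x, y the unique path in T from x to y contains at least one edge labeled 1, then the number of edges of T labeled 1 is at least ℓ − 1, where ℓ is the number of leaves of T. -/

import Mathlib

open SimpleGraph

/-- A leaf of a graph is a vertex with exactly one neighbour (i.e. a vertex of degree 1). -/
def SimpleGraph.IsLeaf {V : Type*} (T : SimpleGraph V) (v : V) : Prop :=
  ∃! u, T.Adj v u

/-- The undirected Fitch graph explained by an edge-labelled tree `(T, lam)`
(labels: `true` = 1, `false` = 0): its vertices are the leaves of `T`, and two
distinct leaves are adjacent iff the (unique) path between them in `T` contains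
at least one edge labelled `1`. -/
def fitchGraph {V : Type*} (T : SimpleGraph V) (lam : Sym2 V → Bool) :
    SimpleGraph {v : V // T.IsLeaf v} where
  Adj x y := x ≠ y ∧ ∃ p : T.Walk x.1 y.1, p.IsPath ∧ ∃ e ∈ p.edges, lam e = true
  symm := ⟨by
    rintro x y ⟨hxy, p, hp, e, he, hl⟩
    exact ⟨hxy.symm, p.reverse, hp.reverse, e, by
      rw [SimpleGraph.Walk.edges_reverse]; exact List.mem_reverse.mpr he, hl⟩⟩
  loopless := ⟨by rintro x ⟨hx, -⟩; exact hx rfl⟩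

/-- A graph is an undirected Fitch graph if it is isomorphic to the Fitch graph
explained by some edge-labelled finite tree. -/
def IsFitchGraph {W : Type*} (G : SimpleGraph W) : Prop :=
  ∃ (V : Type) (T : SimpleGraph V) (lam : Sym2 V → Bool),
    Finite V ∧ T.IsTree ∧ Nonempty (G ≃g fitchGraph T lam)

/-! Delete the `1`-labelled edges of `T`. Every path between two distinct leaves crosses a
deleted edge, so distinct leaves lie in distinct components of what remains. Deleting one edge
creates at most one new component, so deleting `k` edges from the connected `T` leaves at most
`k + 1` components, whence `ℓ ≤ k + 1`. -/

namespace SimpleGraph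

variable {V : Type*} {G H : SimpleGraph V}

lemma reachable_sup_edge_cases {u v x y : V} (h : (H ⊔ edge u v).Reachable x y) :
    H.Reachable x y ∨
      (H.Reachable x u ∨ H.Reachable x v) ∧ (H.Reachable y u ∨ H.Reachable y v) := by
  rw [reachable_iff_reflTransGen] at h
  induction h with
  | refl => exact .inl .rfl
  | @tail b c _ hbc ih =>
    rw [sup_adj, edge_adj] at hbc
    rcases hbc with hbc | ⟨hbc, -⟩
    · have hcb := hbc.symm.reachable
      rcases ih with hxb | ⟨hx, hb | hb⟩
      · exact .inl (hxb.trans hbc.reachable)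
      · exact .inr ⟨hx, .inl (hcb.trans hb)⟩
      · exact .inr ⟨hx, .inr (hcb.trans hb)⟩
    · have hc : H.Reachable c u ∨ H.Reachable c v := by
        rcases hbc with ⟨-, rfl⟩ | ⟨-, rfl⟩ <;> simp
      rcases ih with hxb | ⟨hx, -⟩
      · rcases hbc with ⟨rfl, -⟩ | ⟨rfl, -⟩
        · exact .inr ⟨.inl hxb, hc⟩
        · exact .inr ⟨.inr hxb, hc⟩
      · exact .inr ⟨hx, hc⟩

lemma card_connectedComponent_le_card_sup_edge_add_one [Finite V] (u v : V) :
    Nat.card H.ConnectedComponent ≤ Nat.card (H ⊔ edge u v).ConnectedComponent + 1 := by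
  classical
  let toSup := ConnectedComponent.map (Hom.ofLE (le_sup_left : H ≤ H ⊔ edge u v))
  -- Only the components of `u` and `v` can merge, so forgetting the component of `u`
  -- leaves an injection.
  let f (c : H.ConnectedComponent) : Option (H ⊔ edge u v).ConnectedComponent :=
    if c = H.connectedComponentMk u then none else some (toSup c)
  have hf : Function.Injective f := by
    intro c d hcd
    induction c using ConnectedComponent.ind with | _ x =>
    induction d using ConnectedComponent.ind with | _ y =>
    by_cases hx : H.connectedComponentMk x = H.connectedComponentMk u <;>
      by_cases hy : H.connectedComponentMk y = H.connectedComponentMk u <;>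
      simp only [f, hx, hy, if_true, if_false, reduceCtorEq, Option.some.injEq] at hcd
    · rw [hx, hy]
    · rw [ConnectedComponent.eq] at hx hy ⊢
      rcases reachable_sup_edge_cases (ConnectedComponent.exact hcd) with hxy | ⟨hx' | hx', hy' | hy'⟩
      exacts [hxy, absurd hx' hx, absurd hx' hx, absurd hy' hy, hx'.trans hy'.symm]
  calc Nat.card H.ConnectedComponent ≤ Nat.card (Option (H ⊔ edge u v).ConnectedComponent) :=
        Nat.card_le_card_of_injective f hf
    _ = _ := Finite.card_option

lemma card_connectedComponent_deleteEdges_singleton_le [Finite V] (e : Sym2 V) :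
    Nat.card (G.deleteEdges {e}).ConnectedComponent ≤ Nat.card G.ConnectedComponent + 1 := by
  induction e using Sym2.ind with | _ u v =>
  have hle : G ≤ G.deleteEdges {s(u, v)} ⊔ edge u v := by
    intro a b hab
    by_cases he : s(a, b) = s(u, v)
    · exact .inr (by simpa [edge_adj, hab.ne] using he)
    · exact .inl (by simp [hab, he])
  calc _ ≤ Nat.card (G.deleteEdges {s(u, v)} ⊔ edge u v).ConnectedComponent + 1 :=
        card_connectedComponent_le_card_sup_edge_add_one u v
    _ ≤ _ := by gcongr; exact ConnectedComponent.card_le_card_of_le hle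

lemma card_connectedComponent_deleteEdges_le [Finite V] (s : Set (Sym2 V)) :
    Nat.card (G.deleteEdges s).ConnectedComponent ≤ Nat.card G.ConnectedComponent + s.ncard := by
  induction s, s.toFinite using Set.Finite.induction_on with
  | empty => simp
  | @insert e s he hs ih =>
    rw [Set.ncard_insert_of_notMem he hs, ← Set.union_singleton, ← deleteEdges_deleteEdges]
    have := card_connectedComponent_deleteEdges_singleton_le (G := G.deleteEdges s) e
    omega

lemma ncard_le_card_connectedComponent_deleteEdges [Finite V] {s : Set (Sym2 V)} {L : Set V}
    (hL : ∀ x ∈ L, ∀ y ∈ L, x ≠ y → ∀ p : G.Walk x y, p.IsPath → ∃ e ∈ p.edges, e ∈ s) :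
    L.ncard ≤ Nat.card (G.deleteEdges s).ConnectedComponent := by
  classical
  rw [← Nat.card_coe_set_eq]
  refine Nat.card_le_card_of_injective (fun x : L ↦ (G.deleteEdges s).connectedComponentMk x) ?_
  rintro ⟨x, hx⟩ ⟨y, hy⟩ hxy
  by_contra hne
  obtain ⟨p⟩ := ConnectedComponent.exact hxy
  obtain ⟨e, he, hes⟩ := hL x hx y hy (fun h ↦ hne (Subtype.ext h))
    (p.toPath.val.mapLe (deleteEdges_le s)) (p.toPath.prop.mapLe _)
  rw [Walk.edges_mapLe_eq_edges] at he
  exact (edgeSet_deleteEdges s ▸ p.toPath.val.edges_subset_edgeSet he).2 hes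

end SimpleGraph

theorem one_edges_lower_bound_general {V : Type*} [Fintype V] (T : SimpleGraph V)
    (hT : T.IsTree) (lam : Sym2 V → Bool)
    (h1 : ∀ x y : V, T.IsLeaf x → T.IsLeaf y → x ≠ y →
      ∀ p : T.Walk x y, p.IsPath → ∃ e ∈ p.edges, lam e = true) :
    {v : V | T.IsLeaf v}.ncard - 1 ≤ {e ∈ T.edgeSet | lam e = true}.ncard := by
  have hT₁ : Nat.card T.ConnectedComponent ≤ 1 := Finite.card_le_one_iff_subsingleton.mpr
    hT.connected.preconnected.subsingleton_connectedComponent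
  have hdelete := T.card_connectedComponent_deleteEdges_le {e ∈ T.edgeSet | lam e = true}
  have hleaf_components := ncard_le_card_connectedComponent_deleteEdges
    (G := T) (s := {e ∈ T.edgeSet | lam e = true}) (L := {v | T.IsLeaf v})
    fun x hx y hy hxy p hp ↦
      let ⟨e, he, hl⟩ := h1 x y hx hy hxy p hp
      ⟨e, he, p.edges_subset_edgeSet he, hl⟩
  omega

/-- if `(T, lam)` is an edge-labelled tree with at least two
leaves such that the (unique) path between any two distinct leaves contains an
edge labelled `1`, then the number of `1`-labelled edges of `T` is at least
`ℓ - 1`, where `ℓ` is the number of leaves of `T`. -/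
theorem one_edges_lower_bound {V : Type*} [Fintype V] (T : SimpleGraph V)
    (hT : T.IsTree) (lam : Sym2 V → Bool)
    (hleaves : 2 ≤ {v : V | T.IsLeaf v}.ncard)
    (h1 : ∀ x y : V, T.IsLeaf x → T.IsLeaf y → x ≠ y →
      ∀ p : T.Walk x y, p.IsPath → ∃ e ∈ p.edges, lam e = true) :
    {v : V | T.IsLeaf v}.ncard - 1 ≤ {e ∈ T.edgeSet | lam e = true}.ncard :=
  one_edges_lower_bound_general T hT lam h1
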